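/- Let (Ω, P) be a probability space, let n ≥ 1 and 1 ≤ k ≤ n, let C ≥ 0 and B > 0. Let Z₁,…,Z_n be fixed real numbers (the ideal calibration scores) and let Z̃₁,…,Z̃_n : Ω → ℝ be square-integrable random variables (the empirical calibration scores) satisfying E[(Z̃_i − Z_i)²] ≤ C / B for every i = 1,…,n. Let q denote the k-th order statistic of (Z₁,…,Z_n) and let Q(ω) denote the k-th order statistic of (Z̃₁(ω),…,Z̃_n(ω)). Then E[|Q − q|] ≤ 2√(n·C / B). (Theorem 2, threshold stability: the bank-induced error in the conformal calibration threshold decays at rate O(1/√B).) -/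

import Mathlib

open MeasureTheory ProbabilityTheory

/-!
The `k`-th order statistic is `1`-Lipschitz for the sup-norm: if every coordinate of `a` is
within `ε` of the corresponding coordinate of `b`, then so are their `k`-th order statistics.
Bounding the sup-norm by the Euclidean norm gives `|Q - q| ≤ √(∑ᵢ (Z̃ᵢ - Zᵢ)²)` pointwise, and
Jensen's inequality for the concave `√·` gives `E|Q - q| ≤ √(∑ᵢ E(Z̃ᵢ - Zᵢ)²) ≤ √(n C / B)`.
-/

section OrderStatistic

variable {α β : Type*} [LinearOrder α] [LinearOrder β] {n : ℕ}

def orderStatistic (a : Fin n → α) (k : Fin n) : α :=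
  a (Tuple.sort a k)

/-- Pigeonhole: at least `n - k` indices have `a`-rank `≥ k` and at least `k + 1` have
`b`-rank `≤ k`, so some index has both. -/
lemma exists_orderStatistic_le_and_le (a : Fin n → α) (b : Fin n → β) (k : Fin n) :
    ∃ i, orderStatistic a k ≤ a i ∧ b i ≤ orderStatistic b k := by
  classical
  have hcard : (Finset.univ : Finset (Fin n)).card <
      ((Finset.Ici k).image (Tuple.sort a)).card + ((Finset.Iic k).image (Tuple.sort b)).card := by
    rw [Finset.card_image_of_injective _ (Tuple.sort a).injective,
      Finset.card_image_of_injective _ (Tuple.sort b).injective,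
      Fin.card_Ici, Fin.card_Iic, Finset.card_univ, Fintype.card_fin]
    omega
  obtain ⟨i, hi⟩ := Finset.inter_nonempty_of_card_lt_card_add_card
    (Finset.subset_univ _) (Finset.subset_univ _) hcard
  obtain ⟨hia, hib⟩ := Finset.mem_inter.mp hi
  obtain ⟨j, hkj, rfl⟩ := Finset.mem_image.mp hia
  obtain ⟨l, hlk, hl⟩ := Finset.mem_image.mp hib
  refine ⟨Tuple.sort a j, Tuple.monotone_sort a (Finset.mem_Ici.mp hkj), ?_⟩
  rw [← hl]
  exact Tuple.monotone_sort b (Finset.mem_Iic.mp hlk)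

lemma orderStatistic_le_map_orderStatistic
    {a : Fin n → α} {b : Fin n → β} {f : β → α} (hf : Monotone f)
    (h : ∀ i, a i ≤ f (b i)) (k : Fin n) :
    orderStatistic a k ≤ f (orderStatistic b k) := by
  obtain ⟨i, hai, hbi⟩ := exists_orderStatistic_le_and_le a b k
  exact hai.trans ((h i).trans (hf hbi))

end OrderStatistic

lemma abs_orderStatistic_sub_le {α : Type*} [AddCommGroup α] [LinearOrder α]
    [IsOrderedAddMonoid α] {n : ℕ} {a b : Fin n → α} {ε : α}
    (h : ∀ i, |a i - b i| ≤ ε) (k : Fin n) :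
    |orderStatistic a k - orderStatistic b k| ≤ ε := by
  have hmono : Monotone (· + ε) := fun _ _ hxy => add_le_add_left hxy ε
  rw [abs_sub_le_iff, sub_le_iff_le_add', sub_le_iff_le_add']
  constructor
  · exact orderStatistic_le_map_orderStatistic hmono
      (fun i => sub_le_iff_le_add'.mp (abs_sub_le_iff.mp (h i)).1) k
  · exact orderStatistic_le_map_orderStatistic hmono
      (fun i => sub_le_iff_le_add'.mp (abs_sub_le_iff.mp (h i)).2) k

lemma abs_orderStatistic_sub_le_sqrt_sum_sq {n : ℕ} (a b : Fin n → ℝ) (k : Fin n) :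
    |orderStatistic a k - orderStatistic b k| ≤ √(∑ i, (a i - b i) ^ 2) :=
  abs_orderStatistic_sub_le (fun i => Real.abs_le_sqrt <|
    Finset.single_le_sum (f := fun j => (a j - b j) ^ 2) (fun _ _ => sq_nonneg _)
      (Finset.mem_univ i)) k

section Sqrt

variable {Ω : Type*} [MeasurableSpace Ω] {μ : Measure Ω} {f : Ω → ℝ}

lemma MeasureTheory.Integrable.sqrt [IsFiniteMeasure μ] (hf : Integrable f μ) (hf0 : 0 ≤ f) :
    Integrable (fun ω => √(f ω)) μ := by
  have hmeas : AEStronglyMeasurable (fun ω => √(f ω)) μ :=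
    Real.continuous_sqrt.comp_aestronglyMeasurable hf.aestronglyMeasurable
  refine ((memLp_two_iff_integrable_sq hmeas).2 ?_).integrable one_le_two
  simpa only [Real.sq_sqrt (hf0 _)] using hf

lemma integral_sqrt_le_sqrt_integral [IsProbabilityMeasure μ] (hf : Integrable f μ)
    (hf0 : 0 ≤ f) :
    ∫ ω, √(f ω) ∂μ ≤ √(∫ ω, f ω ∂μ) :=
  Real.strictConcaveOn_sqrt.concaveOn.le_map_integral Real.continuous_sqrt.continuousOn
    isClosed_Ici (Filter.Eventually.of_forall hf0) hf (hf.sqrt hf0)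

end Sqrt

theorem threshold_stability_general {Ω : Type*} [MeasureSpace Ω]
    [IsProbabilityMeasure (ℙ : Measure Ω)]
    (n : ℕ) (k : Fin n) (C B : ℝ)
    (Z : Fin n → ℝ) (Zt : Fin n → Ω → ℝ)
    (hL2 : ∀ i, MemLp (Zt i) 2 ℙ)
    (hmse : ∀ i, (∫ ω, (Zt i ω - Z i) ^ 2 ∂ℙ) ≤ C / B) :
    (∫ ω, |(fun i => Zt i ω) (Tuple.sort (fun i => Zt i ω) k) - Z (Tuple.sort Z k)| ∂ℙ)
      ≤ 2 * Real.sqrt (n * C / B) := by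
  set S : Ω → ℝ := fun ω => ∑ i, (Zt i ω - Z i) ^ 2
  have hS0 : 0 ≤ S := fun ω => Finset.sum_nonneg fun i _ => sq_nonneg _
  have hSq : ∀ i, Integrable (fun ω => (Zt i ω - Z i) ^ 2) ℙ :=
    fun i => ((hL2 i).sub (memLp_const (Z i))).integrable_sq
  have hS : Integrable S ℙ := integrable_finsetSum _ fun i _ => hSq i
  calc (∫ ω, |orderStatistic (fun i => Zt i ω) k - orderStatistic Z k| ∂ℙ)
      ≤ ∫ ω, √(S ω) ∂ℙ :=
        integral_mono_of_nonneg (Filter.Eventually.of_forall fun _ => abs_nonneg _)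
          (hS.sqrt hS0) (Filter.Eventually.of_forall fun ω =>
            abs_orderStatistic_sub_le_sqrt_sum_sq (fun i => Zt i ω) Z k)
    _ ≤ √(∫ ω, S ω ∂ℙ) := integral_sqrt_le_sqrt_integral hS hS0
    _ = √(∑ i, ∫ ω, (Zt i ω - Z i) ^ 2 ∂ℙ) := by rw [integral_finsetSum _ fun i _ => hSq i]
    _ ≤ √(∑ _i : Fin n, C / B) := Real.sqrt_le_sqrt (Finset.sum_le_sum fun i _ => hmse i)
    _ = √(n * C / B) := by rw [Finset.sum_const, Finset.card_univ, Fintype.card_fin,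
        nsmul_eq_mul, mul_div_assoc]
    _ ≤ 2 * √(n * C / B) := by linarith [Real.sqrt_nonneg (n * C / B)]

/-- Theorem 2 (threshold stability): let `Z₁, …, Z_n` be fixed ideal calibration scores
and `Z̃₁, …, Z̃_n` square-integrable empirical calibration scores with
`E[(Z̃_i − Z_i)²] ≤ C / B`. If `q` is the `k`-th order statistic of `Z` and
`Q(ω)` the `k`-th order statistic of `(Z̃₁(ω), …, Z̃_n(ω))` (order statistics realized
via `Tuple.sort`), then `E[|Q − q|] ≤ 2√(n·C / B)`. -/
theorem threshold_stability {Ω : Type*} [MeasureSpace Ω]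
    [IsProbabilityMeasure (ℙ : Measure Ω)]
    (n : ℕ) (hn : 1 ≤ n) (k : Fin n) (C B : ℝ) (hC : 0 ≤ C) (hB : 0 < B)
    (Z : Fin n → ℝ) (Zt : Fin n → Ω → ℝ)
    (hmeas : ∀ i, Measurable (Zt i))
    (hL2 : ∀ i, MemLp (Zt i) 2 ℙ)
    (hmse : ∀ i, (∫ ω, (Zt i ω - Z i) ^ 2 ∂ℙ) ≤ C / B) :
    (∫ ω, |(fun i => Zt i ω) (Tuple.sort (fun i => Zt i ω) k) - Z (Tuple.sort Z k)| ∂ℙ)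
      ≤ 2 * Real.sqrt (n * C / B) :=
  threshold_stability_general n k C B Z Zt hL2 hmse
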